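/- Let n ≥ 1 and let L0 = UΣVᵀ be a rank-r matrix with reduced SVD, T the associated tangent subspace, S0 a matrix with support subspace Ω, M = L0 + S0, Q a linear subspace of ℝ^{n×n}, Γ = Q ∩ T^⊥, τ > 0, and 0 < λ < 1. Assume ‖P_Ω P_{Γ^⊥}‖ ≤ 1/2 and that there exist W, F, D ∈ ℝ^{n×n} and α, β > 0 such that UVᵀ + W + (1/τ)L0 = λ(sgn(S0) + F + P_Ω D) + (1/τ)S0, this matrix lies in Q, P_T W = 0, ‖W‖ ≤ β, P_Ω F = 0, ‖F‖_∞ ≤ β, and ‖P_Ω D‖_F ≤ α. Define f(L,S) = ‖L‖_* + λ‖S‖_1 + (1/(2τ))‖L‖_F² + (1/(2τ))‖S‖_F². Then for all H_L, H_S ∈ ℝ^{n×n} with P_Q H_L = P_Q H_S, f(L0 + H_L, S0 − H_S) ≥ f(L0, S0) + (1 − β − 2αλ)‖P_{T^⊥} H_L‖_* + (1 − β − α)λ‖P_{Ω^⊥} H_S‖_1. -/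

import Mathlib

open scoped BigOperators Matrix

abbrev Mat (n : ℕ) := Matrix (Fin n) (Fin n) ℝ

/-- Trace (Frobenius) inner product `⟨X, Y⟩ = trace (Xᵀ Y)`. -/
def finner {n : ℕ} (X Y : Mat n) : ℝ := ∑ i, ∑ j, X i j * Y i j

/-- Frobenius norm. -/
noncomputable def fnorm {n : ℕ} (X : Mat n) : ℝ := Real.sqrt (finner X X)

/-- Entrywise ℓ¹ norm. -/
def l1Norm {n : ℕ} (X : Mat n) : ℝ := ∑ i, ∑ j, |X i j|

/-- Entrywise ℓ∞ norm. -/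
noncomputable def linfNorm {n : ℕ} (X : Mat n) : ℝ := ⨆ p : Fin n × Fin n, |X p.1 p.2|

/-- Spectral (ℓ² operator) norm. -/
noncomputable def specNorm {n : ℕ} (X : Mat n) : ℝ := ‖Matrix.toEuclideanCLM (𝕜 := ℝ) X‖

/-- Nuclear norm: the sum of the singular values, i.e. of the square roots of the
eigenvalues of `Xᵀ * X`. -/
noncomputable def nucNorm {n : ℕ} (X : Mat n) : ℝ :=
  ∑ i, Real.sqrt (((by simpa [Matrix.conjTranspose_eq_transpose_of_trivial] using
    Matrix.isHermitian_conjTranspose_mul_self X : (Xᵀ * X).IsHermitian)).eigenvalues i)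

/-- Operator norm of a linear map on matrix space, w.r.t. the Frobenius norm:
`sup {‖A X‖_F : ‖X‖_F = 1}`. -/
noncomputable def opNorm {n : ℕ} (A : Mat n →ₗ[ℝ] Mat n) : ℝ :=
  sSup {c : ℝ | ∃ X : Mat n, fnorm X = 1 ∧ c = fnorm (A X)}

/-- `P` is the orthogonal projection onto the subspace `V` (w.r.t. the trace inner product). -/
def IsOrthProj {n : ℕ} (V : Submodule ℝ (Mat n)) (P : Mat n →ₗ[ℝ] Mat n) : Prop :=
  (∀ X, P X ∈ V) ∧ (∀ X ∈ V, P X = X) ∧ (∀ X, ∀ Y ∈ V, finner (X - P X) Y = 0)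

/-- Orthogonal complement of a subspace of matrix space w.r.t. the trace inner product. -/
def orthComp {n : ℕ} (V : Submodule ℝ (Mat n)) : Submodule ℝ (Mat n) where
  carrier := {X | ∀ Y ∈ V, finner X Y = 0}
  zero_mem' := by intro Y hY; simp [finner]
  add_mem' := by
    intro a b ha hb Y hY
    have h1 := ha Y hY
    have h2 := hb Y hY
    simp only [finner, Matrix.add_apply, add_mul, Finset.sum_add_distrib] at *
    rw [h1, h2]; ring
  smul_mem' := by
    intro c a ha Y hY
    have h1 := ha Y hY
    simp only [finner, Matrix.smul_apply, smul_eq_mul, mul_assoc, ← Finset.mul_sum] at *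
    rw [h1]; ring

/-- The tangent space `T = {U Xᵀ + Y Vᵀ}` associated with the reduced SVD `L₀ = U Σ Vᵀ`. -/
def tangentT {n r : ℕ} (U V : Matrix (Fin n) (Fin r) ℝ) : Submodule ℝ (Mat n) where
  carrier := {A | ∃ X Y : Matrix (Fin n) (Fin r) ℝ, A = U * Xᵀ + Y * Vᵀ}
  zero_mem' := ⟨0, 0, by simp⟩
  add_mem' := by
    rintro a b ⟨X1, Y1, rfl⟩ ⟨X2, Y2, rfl⟩
    exact ⟨X1 + X2, Y1 + Y2, by rw [Matrix.transpose_add, Matrix.mul_add, Matrix.add_mul]; abel⟩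
  smul_mem' := by
    rintro c a ⟨X1, Y1, rfl⟩
    exact ⟨c • X1, c • Y1,
      by rw [Matrix.transpose_smul, Matrix.mul_smul, Matrix.smul_mul, smul_add]⟩

/-- The support subspace `Ω` of `S₀`: matrices vanishing wherever `S₀` vanishes. -/
def suppSub {n : ℕ} (S0 : Mat n) : Submodule ℝ (Mat n) where
  carrier := {X | ∀ i j, S0 i j = 0 → X i j = 0}
  zero_mem' := by intro i j _; rfl
  add_mem' := by
    intro a b ha hb i j h
    simp [Matrix.add_apply, ha i j h, hb i j h]
  smul_mem' := by
    intro c a ha i j h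
    simp [Matrix.smul_apply, ha i j h]

/-- Entrywise sign matrix. -/
noncomputable def sgnMat {n : ℕ} (S : Mat n) : Mat n := Matrix.of fun i j => Real.sign (S i j)

/-!
Write `B = P_{T⊥} H_L`. The polar factor `W₀` of `B` lies in `T⊥`, satisfies
`⟨W₀, B⟩ = ‖B‖_*` and `‖UVᵀ + W₀‖ ≤ 1`, so `UVᵀ + W₀` is a subgradient of the nuclear norm at
`L₀`. Together with the sign pattern for the `ℓ¹` norm and the convexity of `‖·‖_F²`, this
bounds `f(L₀ + H_L, S₀ - H_S) - f(L₀, S₀)` below by a linear form in `(H_L, H_S)`. Since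
`G = UVᵀ + W + L₀/τ ∈ Q` and `P_Q H_L = P_Q H_S`, we have `⟨G, H_L⟩ = ⟨G, H_S⟩`; expanding `G`
by the certificate equation leaves only `⟨W, B⟩`, `λ⟨F, P_{Ω⊥} H_S⟩` and `λ⟨P_Ω D, P_Ω H_S⟩`.
The first two are controlled by spectral/nuclear and `ℓ∞`/`ℓ¹` duality. For the third,
`H_S - B ∈ Γ⊥`, so `H_S` and `B` have the same `Γ`-component, and the incoherence
`‖P_Ω P_{Γ⊥}‖ ≤ 1/2` gives `‖P_Ω H_S‖_F ≤ ‖P_{Ω⊥} H_S‖_F + 2‖B‖_F ≤ ‖P_{Ω⊥} H_S‖₁ + 2‖B‖_*`.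
-/

open Matrix
open scoped RealInnerProductSpace

section Frobenius

variable {n : ℕ}

def flatten : Mat n ≃ₗ[ℝ] EuclideanSpace ℝ (Fin n × Fin n) :=
  (LinearEquiv.curry ℝ ℝ (Fin n) (Fin n)).symm.trans (WithLp.linearEquiv 2 ℝ _).symm

@[simp] lemma ofLp_flatten (X : Mat n) : (flatten X).ofLp = fun p => X p.1 p.2 := rfl

lemma finner_eq_inner (X Y : Mat n) : finner X Y = inner ℝ (flatten X) (flatten Y) := by
  simp [finner, PiLp.inner_apply, Fintype.sum_prod_type, mul_comm]

lemma fnorm_eq_norm (X : Mat n) : fnorm X = ‖flatten X‖ := by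
  rw [fnorm, finner_eq_inner, real_inner_self_eq_norm_sq, Real.sqrt_sq (norm_nonneg _)]

lemma finner_comm (X Y : Mat n) : finner X Y = finner Y X := by
  simp only [finner_eq_inner, real_inner_comm]

lemma finner_add_left (X Y Z : Mat n) : finner (X + Y) Z = finner X Z + finner Y Z := by
  simp only [finner_eq_inner, map_add, inner_add_left]

lemma finner_add_right (X Y Z : Mat n) : finner X (Y + Z) = finner X Y + finner X Z := by
  simp only [finner_eq_inner, map_add, inner_add_right]

lemma finner_sub_left (X Y Z : Mat n) : finner (X - Y) Z = finner X Z - finner Y Z := by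
  simp only [finner_eq_inner, map_sub, inner_sub_left]

lemma finner_neg_right (X Y : Mat n) : finner X (-Y) = -finner X Y := by
  simp only [finner_eq_inner, map_neg, inner_neg_right]

lemma finner_smul_left (c : ℝ) (X Y : Mat n) : finner (c • X) Y = c * finner X Y := by
  simp only [finner_eq_inner, map_smul, real_inner_smul_left]

lemma finner_eq_trace (X Y : Mat n) : finner X Y = trace (Xᵀ * Y) := by
  simp only [finner, trace, diag, mul_apply, transpose_apply]
  exact Finset.sum_comm

lemma finner_self_eq_zero {X : Mat n} : finner X X = 0 ↔ X = 0 := by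
  rw [finner_eq_inner, inner_self_eq_zero, LinearEquiv.map_eq_zero_iff]

lemma abs_finner_le_fnorm_mul_fnorm (X Y : Mat n) : |finner X Y| ≤ fnorm X * fnorm Y := by
  simpa only [finner_eq_inner, fnorm_eq_norm] using abs_real_inner_le_norm _ _

lemma fnorm_nonneg (X : Mat n) : 0 ≤ fnorm X := Real.sqrt_nonneg _

lemma fnorm_sq (X : Mat n) : fnorm X ^ 2 = finner X X := by
  rw [fnorm_eq_norm, finner_eq_inner, real_inner_self_eq_norm_sq]

lemma fnorm_add_le (X Y : Mat n) : fnorm (X + Y) ≤ fnorm X + fnorm Y := by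
  simpa only [fnorm_eq_norm, map_add] using norm_add_le _ _

lemma fnorm_sq_add_two_mul_finner_le (X H : Mat n) :
    fnorm X ^ 2 + 2 * finner X H ≤ fnorm (X + H) ^ 2 := by
  rw [fnorm_sq, fnorm_sq, finner_add_left, finner_add_right, finner_add_right, finner_comm H X]
  nlinarith [fnorm_sq H, sq_nonneg (fnorm H)]

lemma fnorm_sq_sub_two_mul_finner_le (X H : Mat n) :
    fnorm X ^ 2 - 2 * finner X H ≤ fnorm (X - H) ^ 2 := by
  simpa [finner_neg_right, sub_eq_add_neg] using fnorm_sq_add_two_mul_finner_le X (-H)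

end Frobenius

section OrthogonalProjection

variable {n : ℕ}

lemma orthComp_anti {V W : Submodule ℝ (Mat n)} (h : V ≤ W) : orthComp W ≤ orthComp V :=
  fun _ hX Y hY => hX Y (h hY)

namespace IsOrthProj

variable {V : Submodule ℝ (Mat n)} {P : Mat n →ₗ[ℝ] Mat n}

lemma apply_mem (hP : IsOrthProj V P) (X : Mat n) : P X ∈ V := hP.1 X

lemma apply_of_mem (hP : IsOrthProj V P) {X : Mat n} (hX : X ∈ V) : P X = X := hP.2.1 X hX

lemma sub_apply_mem_orthComp (hP : IsOrthProj V P) (X : Mat n) : X - P X ∈ orthComp V :=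
  hP.2.2 X

lemma eq_of_sub_mem_orthComp (hP : IsOrthProj V P) {X M : Mat n} (hM : M ∈ V)
    (h : X - M ∈ orthComp V) : P X = M := by
  have hD : P X - M ∈ V := sub_mem (hP.apply_mem X) hM
  have : finner (P X - M) (P X - M) = 0 := by
    nth_rewrite 1 [← sub_sub_sub_cancel_left M (P X) X]
    rw [finner_sub_left, h _ hD, hP.sub_apply_mem_orthComp X _ hD, sub_zero]
  exact sub_eq_zero.1 (finner_self_eq_zero.1 this)

lemma mem_orthComp_of_apply_eq_zero (hP : IsOrthProj V P) {X : Mat n} (h : P X = 0) :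
    X ∈ orthComp V := by
  simpa [h] using hP.sub_apply_mem_orthComp X

lemma finner_apply_right (hP : IsOrthProj V P) {Y : Mat n} (hY : Y ∈ V) (X : Mat n) :
    finner Y (P X) = finner Y X := by
  have := hP.sub_apply_mem_orthComp X Y hY
  rw [finner_sub_left, finner_comm X, finner_comm (P X)] at this
  linarith

lemma finner_eq_of_apply_eq (hP : IsOrthProj V P) {G X Y : Mat n} (hG : G ∈ V)
    (h : P X = P Y) : finner G X = finner G Y := by
  rw [← hP.finner_apply_right hG X, h, hP.finner_apply_right hG Y]

lemma fnorm_sq_eq_add (hP : IsOrthProj V P) (X : Mat n) :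
    fnorm X ^ 2 = fnorm (P X) ^ 2 + fnorm (X - P X) ^ 2 := by
  have h := hP.sub_apply_mem_orthComp X _ (hP.apply_mem X)
  nth_rewrite 1 [← add_sub_cancel (P X) X]
  rw [fnorm_sq, fnorm_sq, fnorm_sq, finner_add_left, finner_add_right, finner_add_right,
    finner_comm (P X) (X - P X), h]
  ring

lemma fnorm_apply_le (hP : IsOrthProj V P) (X : Mat n) : fnorm (P X) ≤ fnorm X := by
  rw [← pow_le_pow_iff_left₀ (fnorm_nonneg _) (fnorm_nonneg _) two_ne_zero, hP.fnorm_sq_eq_add X]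
  exact le_add_of_nonneg_right (sq_nonneg _)

lemma fnorm_sub_apply_le (hP : IsOrthProj V P) (X : Mat n) : fnorm (X - P X) ≤ fnorm X := by
  rw [← pow_le_pow_iff_left₀ (fnorm_nonneg _) (fnorm_nonneg _) two_ne_zero, hP.fnorm_sq_eq_add X]
  exact le_add_of_nonneg_left (sq_nonneg _)

lemma apply_add_apply_orthComp (hP : IsOrthProj V P) {P' : Mat n →ₗ[ℝ] Mat n}
    (hP' : IsOrthProj (orthComp V) P') (X : Mat n) : P X + P' X = X := by
  rw [hP'.eq_of_sub_mem_orthComp (hP.sub_apply_mem_orthComp X) fun Y hY => ?_]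
  · abel
  rw [sub_sub_cancel, finner_comm]
  exact hY _ (hP.apply_mem X)

end IsOrthProj

end OrthogonalProjection

section OperatorNorm

variable {n : ℕ}

lemma fnorm_smul (c : ℝ) (X : Mat n) : fnorm (c • X) = |c| * fnorm X := by
  rw [fnorm_eq_norm, fnorm_eq_norm, map_smul, norm_smul, Real.norm_eq_abs]

lemma fnorm_apply_le_opNorm_mul (A : Mat n →ₗ[ℝ] Mat n) (X : Mat n) :
    fnorm (A X) ≤ opNorm A * fnorm X := by
  set A' := LinearMap.toContinuousLinearMap
    (flatten.toLinearMap ∘ₗ A ∘ₗ (flatten (n := n)).symm.toLinearMap)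
  have hbdd : BddAbove {c : ℝ | ∃ X : Mat n, fnorm X = 1 ∧ c = fnorm (A X)} := by
    refine ⟨‖A'‖, ?_⟩
    rintro _ ⟨Y, hY, rfl⟩
    have h := A'.le_opNorm (flatten Y)
    rw [← fnorm_eq_norm, hY, mul_one] at h
    simpa [A', fnorm_eq_norm] using h
  rcases eq_or_ne (fnorm X) 0 with h0 | h0
  · rw [fnorm_eq_norm, norm_eq_zero, LinearEquiv.map_eq_zero_iff] at h0
    simp [h0, fnorm_eq_norm]
  · have hpos := lt_of_le_of_ne (fnorm_nonneg X) h0.symm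
    have h1 : fnorm (A ((fnorm X)⁻¹ • X)) ≤ opNorm A :=
      le_csSup hbdd ⟨_, by rw [fnorm_smul, abs_inv, abs_of_pos hpos, inv_mul_cancel₀ h0], rfl⟩
    rwa [map_smul, fnorm_smul, abs_inv, abs_of_pos hpos, inv_mul_le_iff₀ hpos, mul_comm] at h1

end OperatorNorm

section Incoherence

variable {n : ℕ}

lemma fnorm_apply_le_of_opNorm_comp_le_half {Ω V : Submodule ℝ (Mat n)}
    {PΩ PΩperp PV : Mat n →ₗ[ℝ] Mat n} (hPΩ : IsOrthProj Ω PΩ)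
    (hPΩperp : IsOrthProj (orthComp Ω) PΩperp) (hPV : IsOrthProj V PV)
    (hop : opNorm (PΩ ∘ₗ PV) ≤ 1 / 2) {H B : Mat n} (hHB : H - B ∈ V) :
    fnorm (PΩ H) ≤ fnorm (PΩperp H) + 2 * fnorm B := by
  have hres : H - PV H = B - PV B := by
    have h := hPV.apply_of_mem hHB
    rw [map_sub] at h
    calc H - PV H = (H - B) - (PV H - PV B) + (B - PV B) := by abel
      _ = B - PV B := by rw [h, sub_self, zero_add]
  have hH : fnorm H ≤ fnorm (PΩ H) + fnorm (PΩperp H) := by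
    simpa only [hPΩ.apply_add_apply_orthComp hPΩperp] using fnorm_add_le (PΩ H) (PΩperp H)
  have hsplit : fnorm (PΩ H) ≤ fnorm (PΩ (PV H)) + fnorm (PΩ (H - PV H)) := by
    simpa only [← map_add, add_sub_cancel] using fnorm_add_le (PΩ (PV H)) (PΩ (H - PV H))
  have hV : fnorm (PΩ (PV H)) ≤ 1 / 2 * fnorm H :=
    (fnorm_apply_le_opNorm_mul (PΩ ∘ₗ PV) H).trans (by gcongr; exact fnorm_nonneg H)
  have hVperp : fnorm (PΩ (H - PV H)) ≤ fnorm B := by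
    rw [hres]; exact (hPΩ.fnorm_apply_le _).trans (hPV.fnorm_sub_apply_le B)
  linarith

end Incoherence

section EntrywiseNorms

variable {n : ℕ}

lemma l1Norm_nonneg (X : Mat n) : 0 ≤ l1Norm X :=
  Finset.sum_nonneg fun _ _ => Finset.sum_nonneg fun _ _ => abs_nonneg _

lemma fnorm_le_l1Norm (X : Mat n) : fnorm X ≤ l1Norm X := by
  have h : l1Norm X = ∑ p, |flatten X p| := by
    simp [l1Norm, Fintype.sum_prod_type]
  rw [fnorm_eq_norm, EuclideanSpace.norm_eq, h,
    Real.sqrt_le_left (Finset.sum_nonneg fun _ _ => abs_nonneg _)]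
  simpa only [Real.norm_eq_abs, sq_abs] using
    Finset.sum_sq_le_sq_sum_of_nonneg fun p _ => abs_nonneg (flatten X p)

lemma abs_finner_le_linfNorm_mul_l1Norm (F Y : Mat n) :
    |finner F Y| ≤ linfNorm F * l1Norm Y := by
  have hF : ∀ i j, |F i j| ≤ linfNorm F := fun i j =>
    le_ciSup (f := fun p : Fin n × Fin n => |F p.1 p.2|) (Set.finite_range _).bddAbove (i, j)
  rw [l1Norm, Finset.mul_sum]
  refine (Finset.abs_sum_le_sum_abs _ _).trans (Finset.sum_le_sum fun i _ => ?_)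
  rw [Finset.mul_sum]
  refine (Finset.abs_sum_le_sum_abs _ _).trans (Finset.sum_le_sum fun j _ => ?_)
  rw [abs_mul]
  exact mul_le_mul_of_nonneg_right (hF i j) (abs_nonneg _)

lemma abs_sub_sign_mul_add_ite_le (a h : ℝ) :
    |a| - Real.sign a * h + (if a = 0 then |h| else 0) ≤ |a - h| := by
  rcases lt_trichotomy a 0 with ha | rfl | ha
  · rw [Real.sign_of_neg ha, abs_of_neg ha, if_neg ha.ne]
    linarith [neg_le_abs (a - h)]
  · simp
  · rw [Real.sign_of_pos ha, abs_of_pos ha, if_neg ha.ne']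
    linarith [le_abs_self (a - h)]

lemma isOrthProj_orthComp_suppSub_apply {S : Mat n} {P : Mat n →ₗ[ℝ] Mat n}
    (hP : IsOrthProj (orthComp (suppSub S)) P) (X : Mat n) :
    P X = Matrix.of fun i j => if S i j = 0 then X i j else 0 := by
  refine hP.eq_of_sub_mem_orthComp (fun Y hY => ?_) (fun Y hY => ?_)
  · refine Finset.sum_eq_zero fun i _ => Finset.sum_eq_zero fun j _ => ?_
    by_cases h : S i j = 0 <;> simp [h, hY i j]
  · rw [finner_comm]
    refine hY _ fun i j h => ?_
    simp [h]

lemma l1Norm_sub_ge {S : Mat n} {P : Mat n →ₗ[ℝ] Mat n}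
    (hP : IsOrthProj (orthComp (suppSub S)) P) (H : Mat n) :
    l1Norm S - finner (sgnMat S) H + l1Norm (P H) ≤ l1Norm (S - H) := by
  rw [isOrthProj_orthComp_suppSub_apply hP]
  simp only [l1Norm, finner, sgnMat, of_apply, Matrix.sub_apply, apply_ite, abs_zero]
  rw [← Finset.sum_sub_distrib, ← Finset.sum_add_distrib]
  refine Finset.sum_le_sum fun i _ => ?_
  rw [← Finset.sum_sub_distrib, ← Finset.sum_add_distrib]
  exact Finset.sum_le_sum fun j _ => abs_sub_sign_mul_add_ite_le _ _

end EntrywiseNorms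

section TangentSpace

variable {n r : ℕ}

lemma mem_orthComp_tangentT_iff {U V : Matrix (Fin n) (Fin r) ℝ} {B : Mat n} :
    B ∈ orthComp (tangentT U V) ↔ Uᵀ * B = 0 ∧ B * V = 0 := by
  constructor
  · intro hB
    have hU := hB (U * (Uᵀ * B)) ⟨(Uᵀ * B)ᵀ, 0, by simp⟩
    have hV := hB (B * V * Vᵀ) ⟨0, B * V, by simp⟩
    rw [finner_eq_trace] at hU hV
    constructor
    · rw [← trace_conjTranspose_mul_self_eq_zero_iff, conjTranspose_eq_transpose_of_trivial]
      simpa [Matrix.mul_assoc] using hU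
    · rw [← trace_mul_conjTranspose_self_eq_zero_iff, conjTranspose_eq_transpose_of_trivial]
      rw [transpose_mul, ← Matrix.mul_assoc, trace_mul_comm]
      simpa [Matrix.mul_assoc] using hV
  · rintro ⟨hUB, hBV⟩ _ ⟨X, Y, rfl⟩
    have hBU : Bᵀ * U = 0 := by simpa using congrArg transpose hUB
    have hVB : Vᵀ * Bᵀ = 0 := by simpa using congrArg transpose hBV
    rw [finner_eq_trace, Matrix.mul_add, trace_add, ← Matrix.mul_assoc, ← Matrix.mul_assoc,
      hBU, trace_mul_comm (Bᵀ * Y), ← Matrix.mul_assoc, hVB]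
    simp

end TangentSpace

section EuclideanAction

variable {m k n r : ℕ}

lemma inner_toEuclideanLin_left (A : Matrix (Fin m) (Fin k) ℝ) (x : EuclideanSpace ℝ (Fin k))
    (y : EuclideanSpace ℝ (Fin m)) :
    ⟪toEuclideanLin A x, y⟫ = ⟪x, toEuclideanLin Aᵀ y⟫ := by
  rw [← conjTranspose_eq_transpose_of_trivial, toEuclideanLin_conjTranspose_eq_adjoint,
    LinearMap.adjoint_inner_right]

lemma toEuclideanLin_mul_apply {o : ℕ} (A : Matrix (Fin m) (Fin k) ℝ)
    (B : Matrix (Fin k) (Fin o) ℝ) (x : EuclideanSpace ℝ (Fin o)) :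
    toEuclideanLin (A * B) x = toEuclideanLin A (toEuclideanLin B x) := by
  simp [toLpLin_mul_same]

lemma norm_toEuclideanLin_le (Z : Mat n) (x : EuclideanSpace ℝ (Fin n)) :
    ‖toEuclideanLin Z x‖ ≤ specNorm Z * ‖x‖ :=
  (toEuclideanCLM (𝕜 := ℝ) Z).le_opNorm x

lemma specNorm_le_of_forall {Z : Mat n} {c : ℝ} (hc : 0 ≤ c)
    (h : ∀ x : EuclideanSpace ℝ (Fin n), ‖toEuclideanLin Z x‖ ≤ c * ‖x‖) : specNorm Z ≤ c :=
  (toEuclideanCLM (𝕜 := ℝ) Z).opNorm_le_bound hc h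

lemma toEuclideanLin_apply_apply_eq_inner (M : Matrix (Fin m) (Fin k) ℝ)
    (x : EuclideanSpace ℝ (Fin k)) (i : Fin m) :
    (toEuclideanLin M x) i = ⟪WithLp.toLp 2 (M i), x⟫ := by
  simp [toLpLin_apply, mulVec, dotProduct, PiLp.inner_apply, mul_comm]

lemma inner_toEuclideanLin_toEuclideanLin {o : ℕ} (A : Matrix (Fin m) (Fin k) ℝ)
    (B : Matrix (Fin m) (Fin o) ℝ) (x : EuclideanSpace ℝ (Fin k)) (y : EuclideanSpace ℝ (Fin o)) :
    ⟪toEuclideanLin A x, toEuclideanLin B y⟫ = ⟪x, toEuclideanLin (Aᵀ * B) y⟫ := by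
  rw [inner_toEuclideanLin_left, toEuclideanLin_mul_apply]

lemma norm_toEuclideanLin_of_transpose_mul_self {U : Matrix (Fin m) (Fin k) ℝ} (hU : Uᵀ * U = 1)
    (x : EuclideanSpace ℝ (Fin k)) : ‖toEuclideanLin U x‖ = ‖x‖ := by
  rw [← sq_eq_sq₀ (norm_nonneg _) (norm_nonneg _), ← real_inner_self_eq_norm_sq,
    inner_toEuclideanLin_toEuclideanLin, hU, ← real_inner_self_eq_norm_sq]
  simp

lemma specNorm_mul_transpose_add_le_one {U V : Matrix (Fin n) (Fin r) ℝ} {W : Mat n}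
    (hU : Uᵀ * U = 1) (hV : Vᵀ * V = 1) (hUW : Uᵀ * W = 0) (hWV : W * V = 0)
    (hW : specNorm W ≤ 1) : specNorm (U * Vᵀ + W) ≤ 1 := by
  refine specNorm_le_of_forall zero_le_one fun x => ?_
  set a := toEuclideanLin Vᵀ x
  set w := x - toEuclideanLin V a
  have hVw : toEuclideanLin Vᵀ w = 0 := by
    rw [map_sub, ← toEuclideanLin_mul_apply, hV]; simp [a]
  have hx : ‖x‖ ^ 2 = ‖a‖ ^ 2 + ‖w‖ ^ 2 := by
    have hxw : x = toEuclideanLin V a + w := (add_sub_cancel _ x).symm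
    have horth : ⟪toEuclideanLin V a, w⟫ = 0 := by
      rw [inner_toEuclideanLin_left, hVw, inner_zero_right]
    rw [hxw, norm_add_sq_real, horth, norm_toEuclideanLin_of_transpose_mul_self hV]
    ring
  have hWx : toEuclideanLin W x = toEuclideanLin W w := by
    rw [map_sub, ← toEuclideanLin_mul_apply, hWV]; simp
  have hUW' : ⟪toEuclideanLin U a, toEuclideanLin W w⟫ = 0 := by
    rw [inner_toEuclideanLin_toEuclideanLin, hUW]; simp
  have hWw : ‖toEuclideanLin W w‖ ≤ ‖w‖ :=
    (norm_toEuclideanLin_le W w).trans (mul_le_of_le_one_left (norm_nonneg _) hW)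
  rw [one_mul, ← pow_le_pow_iff_left₀ (norm_nonneg _) (norm_nonneg _) two_ne_zero, map_add,
    LinearMap.add_apply, toEuclideanLin_mul_apply, hWx, norm_add_sq_real, hUW',
    norm_toEuclideanLin_of_transpose_mul_self hU, hx]
  nlinarith [norm_nonneg (toEuclideanLin W w)]

end EuclideanAction

section SingularValues

variable {n : ℕ}

lemma isHermitian_transpose_mul_self (X : Mat n) : (Xᵀ * X).IsHermitian := by
  simpa [conjTranspose_eq_transpose_of_trivial] using isHermitian_conjTranspose_mul_self X

noncomputable def rightSingularBasis (X : Mat n) :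
    OrthonormalBasis (Fin n) ℝ (EuclideanSpace ℝ (Fin n)) :=
  (isHermitian_transpose_mul_self X).eigenvectorBasis

noncomputable def singularValue (X : Mat n) (i : Fin n) : ℝ :=
  √((isHermitian_transpose_mul_self X).eigenvalues i)

lemma nucNorm_eq_sum_singularValue (X : Mat n) : nucNorm X = ∑ i, singularValue X i := rfl

lemma toEuclideanLin_transpose_mul_self_rightSingularBasis (X : Mat n) (i : Fin n) :
    toEuclideanLin (Xᵀ * X) (rightSingularBasis X i) =
      singularValue X i ^ 2 • rightSingularBasis X i := by
  have h : toEuclideanLin (Xᵀ * X) (rightSingularBasis X i) =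
      (isHermitian_transpose_mul_self X).eigenvalues i • rightSingularBasis X i :=
    WithLp.ofLp_injective 2 ((isHermitian_transpose_mul_self X).mulVec_eigenvectorBasis i)
  have hμ : 0 ≤ (isHermitian_transpose_mul_self X).eigenvalues i := by
    have := inner_toEuclideanLin_toEuclideanLin X X
      (rightSingularBasis X i) (rightSingularBasis X i)
    rw [h, real_inner_smul_right, OrthonormalBasis.inner_eq_one, mul_one] at this
    exact this ▸ real_inner_self_nonneg
  rwa [singularValue, Real.sq_sqrt hμ]

lemma inner_toEuclideanLin_rightSingularBasis (X : Mat n) (i j : Fin n) :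
    ⟪toEuclideanLin X (rightSingularBasis X i), toEuclideanLin X (rightSingularBasis X j)⟫ =
      if i = j then singularValue X i ^ 2 else 0 := by
  rw [inner_toEuclideanLin_toEuclideanLin, toEuclideanLin_transpose_mul_self_rightSingularBasis,
    real_inner_smul_right, OrthonormalBasis.inner_eq_ite]
  split_ifs with hij
  · rw [hij, mul_one]
  · rw [mul_zero]

lemma inner_rightSingularBasis_eq_zero_of_toEuclideanLin_eq_zero {X : Mat n}
    {w : EuclideanSpace ℝ (Fin n)} (hw : toEuclideanLin X w = 0) {i : Fin n}
    (hi : singularValue X i ≠ 0) :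
    ⟪rightSingularBasis X i, w⟫ = 0 := by
  have h := inner_toEuclideanLin_toEuclideanLin X X w (rightSingularBasis X i)
  rw [hw, inner_zero_left, toEuclideanLin_transpose_mul_self_rightSingularBasis,
    real_inner_smul_right, real_inner_comm] at h
  exact (mul_eq_zero.1 h.symm).resolve_left (pow_ne_zero 2 hi)

lemma singularValue_nonneg (X : Mat n) (i : Fin n) : 0 ≤ singularValue X i := Real.sqrt_nonneg _

lemma norm_toEuclideanLin_rightSingularBasis (X : Mat n) (i : Fin n) :
    ‖toEuclideanLin X (rightSingularBasis X i)‖ = singularValue X i := by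
  rw [← sq_eq_sq₀ (norm_nonneg _) (singularValue_nonneg X i), ← real_inner_self_eq_norm_sq,
    inner_toEuclideanLin_rightSingularBasis, if_pos rfl]

lemma finner_eq_sum_inner (Z X : Mat n)
    (b : OrthonormalBasis (Fin n) ℝ (EuclideanSpace ℝ (Fin n))) :
    finner Z X = ∑ i, ⟪toEuclideanLin Z (b i), toEuclideanLin X (b i)⟫ := by
  simp only [PiLp.inner_apply (toEuclideanLin Z _), toEuclideanLin_apply_apply_eq_inner,
    RCLike.inner_apply, conj_trivial]
  rw [Finset.sum_comm, finner]
  refine Finset.sum_congr rfl fun k _ => ?_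
  simp_rw [real_inner_comm _ (WithLp.toLp 2 (Z k)), b.sum_inner_mul_inner]
  simp [PiLp.inner_apply]

lemma finner_le_specNorm_mul_nucNorm (Z X : Mat n) : finner Z X ≤ specNorm Z * nucNorm X := by
  rw [finner_eq_sum_inner Z X (rightSingularBasis X), nucNorm_eq_sum_singularValue, Finset.mul_sum]
  gcongr with i
  calc _ ≤ ‖toEuclideanLin Z (rightSingularBasis X i)‖ * singularValue X i := by
        rw [← norm_toEuclideanLin_rightSingularBasis]; exact real_inner_le_norm _ _
    _ ≤ specNorm Z * singularValue X i := by
        gcongr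
        · exact singularValue_nonneg X i
        · simpa using norm_toEuclideanLin_le Z (rightSingularBasis X i)

lemma fnorm_le_nucNorm (X : Mat n) : fnorm X ≤ nucNorm X := by
  rw [nucNorm_eq_sum_singularValue, ← pow_le_pow_iff_left₀ (fnorm_nonneg X)
    (Finset.sum_nonneg fun i _ => singularValue_nonneg X i) two_ne_zero, fnorm_sq,
    finner_eq_sum_inner X X (rightSingularBasis X)]
  simp only [inner_toEuclideanLin_rightSingularBasis]
  exact Finset.sum_sq_le_sq_sum_of_nonneg fun i _ => singularValue_nonneg X i

end SingularValues

section PolarFactor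

variable {n r : ℕ}

/-- The partial isometry `X (XᵀX)^{+1/2}` of the polar decomposition of `X`; the convention
`0⁻¹ = 0` makes it vanish on the kernel of `X`. -/
noncomputable def polarFactor (X : Mat n) : Mat n :=
  toEuclideanLin.symm (∑ i, (singularValue X i)⁻¹ •
    (innerₛₗ ℝ (rightSingularBasis X i)).smulRight (toEuclideanLin X (rightSingularBasis X i)))

lemma toEuclideanLin_polarFactor (X : Mat n) (y : EuclideanSpace ℝ (Fin n)) :
    toEuclideanLin (polarFactor X) y = ∑ i, ((singularValue X i)⁻¹ * ⟪rightSingularBasis X i, y⟫) •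
      toEuclideanLin X (rightSingularBasis X i) := by
  simp only [polarFactor, LinearEquiv.apply_symm_apply, LinearMap.sum_apply,
    LinearMap.smul_apply, LinearMap.smulRight_apply, innerₛₗ_apply_apply, smul_smul]

lemma norm_sum_smul_toEuclideanLin_rightSingularBasis_sq (X : Mat n) (a : Fin n → ℝ) :
    ‖∑ i, a i • toEuclideanLin X (rightSingularBasis X i)‖ ^ 2 =
      ∑ i, (a i * singularValue X i) ^ 2 := by
  rw [← real_inner_self_eq_norm_sq]
  simp only [sum_inner, inner_sum, real_inner_smul_left, real_inner_smul_right,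
    inner_toEuclideanLin_rightSingularBasis, mul_ite, mul_zero, Finset.sum_ite_eq',
    Finset.mem_univ, if_true]
  exact Finset.sum_congr rfl fun i _ => by ring

lemma toEuclideanLin_polarFactor_rightSingularBasis (X : Mat n) (j : Fin n) :
    toEuclideanLin (polarFactor X) (rightSingularBasis X j) =
      (singularValue X j)⁻¹ • toEuclideanLin X (rightSingularBasis X j) := by
  simp [toEuclideanLin_polarFactor, OrthonormalBasis.inner_eq_ite]

lemma finner_polarFactor_self (X : Mat n) : finner (polarFactor X) X = nucNorm X := by
  rw [finner_eq_sum_inner _ _ (rightSingularBasis X), nucNorm_eq_sum_singularValue]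
  refine Finset.sum_congr rfl fun j _ => ?_
  rw [toEuclideanLin_polarFactor_rightSingularBasis, real_inner_smul_left,
    real_inner_self_eq_norm_sq, norm_toEuclideanLin_rightSingularBasis]
  rcases eq_or_ne (singularValue X j) 0 with hj | hj
  · simp [hj]
  · field_simp

lemma specNorm_polarFactor_le_one (X : Mat n) : specNorm (polarFactor X) ≤ 1 := by
  refine specNorm_le_of_forall zero_le_one fun y => ?_
  rw [one_mul, ← pow_le_pow_iff_left₀ (norm_nonneg _) (norm_nonneg _) two_ne_zero,
    toEuclideanLin_polarFactor, norm_sum_smul_toEuclideanLin_rightSingularBasis_sq,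
    ← (rightSingularBasis X).sum_sq_inner_right y]
  refine Finset.sum_le_sum fun i _ => ?_
  rw [mul_right_comm, mul_pow]
  refine mul_le_of_le_one_left (sq_nonneg _) ?_
  rcases eq_or_ne (singularValue X i) 0 with hi | hi <;> simp [hi]

lemma transpose_mul_polarFactor {U : Matrix (Fin n) (Fin r) ℝ} {X : Mat n} (hUX : Uᵀ * X = 0) :
    Uᵀ * polarFactor X = 0 := by
  refine toEuclideanLin.injective (LinearMap.ext fun y => ?_)
  simp [toEuclideanLin_polarFactor, ← toEuclideanLin_mul_apply, hUX]

lemma polarFactor_mul {V : Matrix (Fin n) (Fin r) ℝ} {X : Mat n} (hXV : X * V = 0) :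
    polarFactor X * V = 0 := by
  refine toEuclideanLin.injective (LinearMap.ext fun y => ?_)
  have hw : toEuclideanLin X (toEuclideanLin V y) = 0 := by
    rw [← toEuclideanLin_mul_apply, hXV]; simp
  rw [toEuclideanLin_mul_apply, toEuclideanLin_polarFactor, map_zero, LinearMap.zero_apply]
  refine Finset.sum_eq_zero fun i _ => ?_
  rcases eq_or_ne (singularValue X i) 0 with hi | hi
  · simp [hi]
  · simp [inner_rightSingularBasis_eq_zero_of_toEuclideanLin_eq_zero hw hi]

end PolarFactor

section NuclearSubgradient

variable {n r : ℕ}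

lemma nucNorm_nonneg (X : Mat n) : 0 ≤ nucNorm X :=
  Finset.sum_nonneg fun i _ => singularValue_nonneg X i

lemma transpose_mul_mul_apply_self_le_specNorm {U V : Matrix (Fin n) (Fin r) ℝ}
    (hU : Uᵀ * U = 1) (hV : Vᵀ * V = 1) (Z : Mat n) (i : Fin r) :
    (Uᵀ * Z * V) i i ≤ specNorm Z := by
  set e := EuclideanSpace.single i (1 : ℝ)
  have h : (Uᵀ * Z * V) i i = ⟪toEuclideanLin U e, toEuclideanLin Z (toEuclideanLin V e)⟫ := by
    rw [inner_toEuclideanLin_left, ← toEuclideanLin_mul_apply, ← toEuclideanLin_mul_apply,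
      EuclideanSpace.inner_single_left]
    simp [e, toLpLin_apply, mul_apply, mulVec, dotProduct]
  calc _ ≤ ‖toEuclideanLin U e‖ * ‖toEuclideanLin Z (toEuclideanLin V e)‖ :=
        h ▸ real_inner_le_norm _ _
    _ ≤ specNorm Z := by
        have he : ‖e‖ = 1 := by simp [e]
        rw [norm_toEuclideanLin_of_transpose_mul_self hU, he, one_mul]
        simpa [norm_toEuclideanLin_of_transpose_mul_self hV, he] using
          norm_toEuclideanLin_le Z (toEuclideanLin V e)

lemma nucNorm_mul_diagonal_mul_transpose_le {U V : Matrix (Fin n) (Fin r) ℝ} {d : Fin r → ℝ}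
    (hU : Uᵀ * U = 1) (hV : Vᵀ * V = 1) (hd : ∀ i, 0 ≤ d i) :
    nucNorm (U * diagonal d * Vᵀ) ≤ ∑ i, d i := by
  set Z := polarFactor (U * diagonal d * Vᵀ)
  have htrace : finner Z (U * diagonal d * Vᵀ) = ∑ i, d i * (Uᵀ * Z * V) i i := by
    have hT : Vᵀ * Zᵀ * U = (Uᵀ * Z * V)ᵀ := by simp [transpose_mul, Matrix.mul_assoc]
    rw [finner_eq_trace, ← Matrix.mul_assoc, trace_mul_comm, ← Matrix.mul_assoc,
      ← Matrix.mul_assoc, hT]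
    simp only [trace, diag_apply, mul_diagonal, transpose_apply]
    exact Finset.sum_congr rfl fun i _ => mul_comm _ _
  rw [← finner_polarFactor_self, htrace]
  refine Finset.sum_le_sum fun i _ => mul_le_of_le_one_right (hd i) ?_
  exact (transpose_mul_mul_apply_self_le_specNorm hU hV Z i).trans (specNorm_polarFactor_le_one _)

lemma finner_mul_transpose_mul_diagonal_mul_transpose {U V : Matrix (Fin n) (Fin r) ℝ}
    (hU : Uᵀ * U = 1) (hV : Vᵀ * V = 1) (d : Fin r → ℝ) :
    finner (U * Vᵀ) (U * diagonal d * Vᵀ) = ∑ i, d i := by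
  rw [finner_eq_trace, transpose_mul, transpose_transpose, Matrix.mul_assoc V,
    ← Matrix.mul_assoc Uᵀ, ← Matrix.mul_assoc Uᵀ, hU, Matrix.one_mul, trace_mul_comm,
    Matrix.mul_assoc, hV, Matrix.mul_one, trace_diagonal]

lemma nucNorm_add_ge {U V : Matrix (Fin n) (Fin r) ℝ} {d : Fin r → ℝ} {P : Mat n →ₗ[ℝ] Mat n}
    (hU : Uᵀ * U = 1) (hV : Vᵀ * V = 1) (hd : ∀ i, 0 ≤ d i)
    (hP : IsOrthProj (orthComp (tangentT U V)) P) (H : Mat n) :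
    nucNorm (U * diagonal d * Vᵀ) + finner (U * Vᵀ) H + nucNorm (P H) ≤
      nucNorm (U * diagonal d * Vᵀ + H) := by
  set L := U * diagonal d * Vᵀ
  set Z := polarFactor (P H)
  obtain ⟨hUB, hBV⟩ := mem_orthComp_tangentT_iff.1 (hP.apply_mem H)
  have hZ : Z ∈ orthComp (tangentT U V) :=
    mem_orthComp_tangentT_iff.2 ⟨transpose_mul_polarFactor hUB, polarFactor_mul hBV⟩
  have hL : L ∈ tangentT U V := ⟨V * diagonal d, 0, by simp [L, Matrix.mul_assoc]⟩
  have hZH : finner Z H = nucNorm (P H) := by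
    rw [← hP.finner_apply_right hZ H, finner_polarFactor_self]
  have hnorm : specNorm (U * Vᵀ + Z) ≤ 1 :=
    specNorm_mul_transpose_add_le_one hU hV (transpose_mul_polarFactor hUB) (polarFactor_mul hBV)
      (specNorm_polarFactor_le_one _)
  calc nucNorm L + finner (U * Vᵀ) H + nucNorm (P H)
      ≤ finner (U * Vᵀ + Z) (L + H) := by
        rw [finner_add_left, finner_add_right, finner_add_right, hZ L hL, hZH,
          finner_mul_transpose_mul_diagonal_mul_transpose hU hV]
        linarith [nucNorm_mul_diagonal_mul_transpose_le hU hV hd]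
    _ ≤ specNorm (U * Vᵀ + Z) * nucNorm (L + H) := finner_le_specNorm_mul_nucNorm _ _
    _ ≤ nucNorm (L + H) := mul_le_of_le_one_left (nucNorm_nonneg _) hnorm

end NuclearSubgradient

theorem statement8_general {n r : ℕ}
    (L0 S0 : Mat n) (U V : Matrix (Fin n) (Fin r) ℝ) (d : Fin r → ℝ)
    (hU : Uᵀ * U = 1) (hV : Vᵀ * V = 1) (hd : ∀ i, 0 < d i)
    (hL0 : L0 = U * Matrix.diagonal d * Vᵀ)
    (Q : Submodule ℝ (Mat n)) (τ lam : ℝ) (hτ : 0 < τ) (hlam0 : 0 < lam)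
    (PQ PT PΩ PΩperp PTperp PΓperp : Mat n →ₗ[ℝ] Mat n)
    (hPQ : IsOrthProj Q PQ)
    (hPT : IsOrthProj (tangentT U V) PT)
    (hPΩ : IsOrthProj (suppSub S0) PΩ)
    (hPΩperp : IsOrthProj (orthComp (suppSub S0)) PΩperp)
    (hPTperp : IsOrthProj (orthComp (tangentT U V)) PTperp)
    (hPΓperp : IsOrthProj (orthComp (Q ⊓ orthComp (tangentT U V))) PΓperp)
    (hop : opNorm (PΩ ∘ₗ PΓperp) ≤ 1 / 2)
    (W F D : Mat n) (α β : ℝ) (hα : 0 < α)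
    (heq : U * Vᵀ + W + (1 / τ) • L0 = lam • (sgnMat S0 + F + PΩ D) + (1 / τ) • S0)
    (hmemQ : U * Vᵀ + W + (1 / τ) • L0 ∈ Q)
    (hW1 : PT W = 0) (hW2 : specNorm W ≤ β)
    (hF1 : PΩ F = 0) (hF2 : linfNorm F ≤ β)
    (hD : fnorm (PΩ D) ≤ α) :
    ∀ HL HS : Mat n, PQ HL = PQ HS →
      nucNorm (L0 + HL) + lam * l1Norm (S0 - HS) + 1 / (2 * τ) * fnorm (L0 + HL) ^ 2 +
          1 / (2 * τ) * fnorm (S0 - HS) ^ 2 ≥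
        (nucNorm L0 + lam * l1Norm S0 + 1 / (2 * τ) * fnorm L0 ^ 2 +
            1 / (2 * τ) * fnorm S0 ^ 2) +
          (1 - β - 2 * α * lam) * nucNorm (PTperp HL) +
          (1 - β - α) * lam * l1Norm (PΩperp HS) := by
  intro HL HS hQ
  set B := PTperp HL
  have hnuc : nucNorm L0 + finner (U * Vᵀ) HL + nucNorm B ≤ nucNorm (L0 + HL) :=
    hL0 ▸ nucNorm_add_ge hU hV (fun i => (hd i).le) hPTperp HL
  have hkey := hPQ.finner_eq_of_apply_eq hmemQ hQ
  nth_rewrite 2 [heq] at hkey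
  simp only [finner_add_left, finner_smul_left] at hkey
  have hW : finner W HL ≤ β * nucNorm B := by
    rw [← hPTperp.finner_apply_right (hPT.mem_orthComp_of_apply_eq_zero hW1)]
    exact (finner_le_specNorm_mul_nucNorm W B).trans
      (mul_le_mul_of_nonneg_right hW2 (nucNorm_nonneg B))
  have hF : -(β * l1Norm (PΩperp HS)) ≤ finner F HS := by
    rw [← hPΩperp.finner_apply_right (hPΩ.mem_orthComp_of_apply_eq_zero hF1), neg_le]
    exact (neg_le_abs _).trans ((abs_finner_le_linfNorm_mul_l1Norm F _).trans
      (mul_le_mul_of_nonneg_right hF2 (l1Norm_nonneg _)))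
  have hHS : fnorm (PΩ HS) ≤ l1Norm (PΩperp HS) + 2 * nucNorm B := by
    have hHSB : HS - B ∈ orthComp (Q ⊓ orthComp (tangentT U V)) := by
      rw [← sub_sub_sub_cancel_left B HS HL]
      have hQperp : HL - HS ∈ orthComp Q :=
        hPQ.mem_orthComp_of_apply_eq_zero (by rw [map_sub, hQ, sub_self])
      exact sub_mem (orthComp_anti inf_le_right (hPTperp.sub_apply_mem_orthComp HL))
        (orthComp_anti inf_le_left hQperp)
    linarith [fnorm_apply_le_of_opNorm_comp_le_half hPΩ hPΩperp hPΓperp hop hHSB,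
      fnorm_le_l1Norm (PΩperp HS), fnorm_le_nucNorm B]
  have hDHS : -(α * (l1Norm (PΩperp HS) + 2 * nucNorm B)) ≤ finner (PΩ D) HS := by
    rw [← hPΩ.finner_apply_right (hPΩ.apply_mem D), neg_le]
    exact (neg_le_abs _).trans ((abs_finner_le_fnorm_mul_fnorm _ _).trans
      (mul_le_mul hD hHS (fnorm_nonneg _) hα.le))
  linear_combination hnuc + lam * l1Norm_sub_ge hPΩperp HS +
    1 / (2 * τ) * fnorm_sq_add_two_mul_finner_le L0 HL +
    1 / (2 * τ) * fnorm_sq_sub_two_mul_finner_le S0 HS - hkey + hW + lam * hF + lam * hDHS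

/-- The key subgradient inequality: for any feasible perturbation
`(H_L, H_S)` (i.e. `P_Q H_L = P_Q H_S`),
`f(L₀ + H_L, S₀ − H_S) ≥ f(L₀, S₀) + (1 − β − 2αλ)‖P_{T^⊥} H_L‖₊ + (1 − β − α)λ‖P_{Ω^⊥} H_S‖₁`,
where `f(L, S) = ‖L‖₊ + λ‖S‖₁ + ‖L‖_F²/(2τ) + ‖S‖_F²/(2τ)`. -/
theorem statement8 {n r : ℕ} (hn : 1 ≤ n)
    (L0 S0 M : Mat n) (U V : Matrix (Fin n) (Fin r) ℝ) (d : Fin r → ℝ)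
    (hU : Uᵀ * U = 1) (hV : Vᵀ * V = 1) (hd : ∀ i, 0 < d i)
    (hL0 : L0 = U * Matrix.diagonal d * Vᵀ)
    (hM : M = L0 + S0)
    (Q : Submodule ℝ (Mat n)) (τ lam : ℝ) (hτ : 0 < τ) (hlam0 : 0 < lam) (hlam1 : lam < 1)
    (PQ PT PΩ PΩperp PTperp PΓperp : Mat n →ₗ[ℝ] Mat n)
    (hPQ : IsOrthProj Q PQ)
    (hPT : IsOrthProj (tangentT U V) PT)
    (hPΩ : IsOrthProj (suppSub S0) PΩ)
    (hPΩperp : IsOrthProj (orthComp (suppSub S0)) PΩperp)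
    (hPTperp : IsOrthProj (orthComp (tangentT U V)) PTperp)
    (hPΓperp : IsOrthProj (orthComp (Q ⊓ orthComp (tangentT U V))) PΓperp)
    (hop : opNorm (PΩ ∘ₗ PΓperp) ≤ 1 / 2)
    (W F D : Mat n) (α β : ℝ) (hα : 0 < α) (hβ : 0 < β)
    (heq : U * Vᵀ + W + (1 / τ) • L0 = lam • (sgnMat S0 + F + PΩ D) + (1 / τ) • S0)
    (hmemQ : U * Vᵀ + W + (1 / τ) • L0 ∈ Q)
    (hW1 : PT W = 0) (hW2 : specNorm W ≤ β)
    (hF1 : PΩ F = 0) (hF2 : linfNorm F ≤ β)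
    (hD : fnorm (PΩ D) ≤ α) :
    ∀ HL HS : Mat n, PQ HL = PQ HS →
      nucNorm (L0 + HL) + lam * l1Norm (S0 - HS) + 1 / (2 * τ) * fnorm (L0 + HL) ^ 2 +
          1 / (2 * τ) * fnorm (S0 - HS) ^ 2 ≥
        (nucNorm L0 + lam * l1Norm S0 + 1 / (2 * τ) * fnorm L0 ^ 2 +
            1 / (2 * τ) * fnorm S0 ^ 2) +
          (1 - β - 2 * α * lam) * nucNorm (PTperp HL) +
          (1 - β - α) * lam * l1Norm (PΩperp HS) :=
  statement8_general L0 S0 U V d hU hV hd hL0 Q τ lam hτ hlam0 PQ PT PΩ PΩperp PTperp PΓperp hPQ hPT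
    hPΩ hPΩperp hPTperp hPΓperp hop W F D α β hα heq hmemQ hW1 hW2 hF1 hF2 hD
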